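/- Let H be a finite-dimensional real inner product space, let A : H → H be a symmetric (self-adjoint) positive definite linear operator, let τ > 0 and σ ≥ 1/√2. Suppose y, ỹ, y⁺ ∈ H satisfy the prediction step (I + τA)(ỹ − y)/τ + A y = 0 and the correction step (I + στA)² (y⁺ − y)/τ + (I + τA + (τ²/2)A² − (I + στA)²)(ỹ − y)/τ + (A + (τ/2)A²) y = 0. Then ‖y⁺‖ ≤ ‖y‖. -/

import Mathlib

/-!
In an orthonormal eigenbasis of `A` the scheme decouples: the coefficient of `y` along an
eigenvector with eigenvalue `μ ≥ 0` is multiplied by `s(τμ) = N(τμ) / D(τμ)`. For `z ≥ 0`,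
`D(z) - N(z) = z(1 + σz)² + z²/2 ≥ 0`, while `N(z) ≥ 0` because `σ² ≥ 1/2`; hence `|s(z)| ≤ 1`,
and by Parseval the norm cannot grow.
-/

open RealInnerProductSpace

namespace FactorizedScheme

/-- `s(z) = stabilityNum σ z / stabilityDen σ z`; the denominator is
`1 + (1+2σ)z + (σ²+2σ)z² + σ²z³` in factorized form. -/
noncomputable def stabilityNum (σ z : ℝ) : ℝ := 1 + 2 * σ * z + (σ ^ 2 - 1 / 2) * z ^ 2

noncomputable def stabilityDen (σ z : ℝ) : ℝ := (1 + σ * z) ^ 2 * (1 + z)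

theorem stabilityDen_sub_stabilityNum (σ z : ℝ) :
    stabilityDen σ z - stabilityNum σ z = z * (1 + σ * z) ^ 2 + z ^ 2 / 2 := by
  unfold stabilityDen stabilityNum
  ring

theorem stabilityNum_le_stabilityDen (σ : ℝ) {z : ℝ} (hz : 0 ≤ z) :
    stabilityNum σ z ≤ stabilityDen σ z := by
  have hgap : 0 ≤ z * (1 + σ * z) ^ 2 + z ^ 2 / 2 := by positivity
  linarith [stabilityDen_sub_stabilityNum σ z]

theorem stabilityNum_nonneg {σ z : ℝ} (hσ : 0 ≤ σ) (hσ2 : 1 / 2 ≤ σ ^ 2) (hz : 0 ≤ z) :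
    0 ≤ stabilityNum σ z := by
  unfold stabilityNum
  have : 0 ≤ (σ ^ 2 - 1 / 2) * z ^ 2 := mul_nonneg (by linarith) (sq_nonneg z)
  positivity

theorem stabilityDen_pos {σ z : ℝ} (hσ : 0 ≤ σ) (hz : 0 ≤ z) : 0 < stabilityDen σ z := by
  unfold stabilityDen
  positivity

theorem abs_le_abs_of_stabilityDen_mul_eq {σ z p c : ℝ} (hσ : 1 / √2 ≤ σ) (hz : 0 ≤ z)
    (h : stabilityDen σ z * p = stabilityNum σ z * c) : |p| ≤ |c| := by
  have hσ0 : 0 ≤ σ := le_trans (by positivity) hσ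
  have hσ2 : 1 / 2 ≤ σ ^ 2 := by
    calc (1 : ℝ) / 2 = (1 / √2) ^ 2 := by rw [div_pow, Real.sq_sqrt zero_le_two, one_pow]
      _ ≤ σ ^ 2 := pow_le_pow_left₀ (by positivity) hσ 2
  have hD := stabilityDen_pos hσ0 hz
  have hN := stabilityNum_nonneg hσ0 hσ2 hz
  have hND := stabilityNum_le_stabilityDen σ hz
  rw [← mul_le_mul_iff_of_pos_left hD, ← abs_of_pos hD, ← abs_mul, h, abs_mul, abs_of_pos hD,
    abs_of_nonneg hN]
  exact mul_le_mul_of_nonneg_right hND (abs_nonneg c)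

/-- The scheme on the coefficients `c, t, p` of `y, ỹ, y⁺` along an eigenvector with eigenvalue
`μ`, with `z = τμ` and both steps multiplied by `τ`. -/
theorem stabilityDen_mul_eq {σ z c t p : ℝ} (hpred : (1 + z) * (t - c) + z * c = 0)
    (hcorr : (1 + σ * z) ^ 2 * (p - c) + (1 + z + z ^ 2 / 2 - (1 + σ * z) ^ 2) * (t - c)
      + (z + z ^ 2 / 2) * c = 0) :
    stabilityDen σ z * p = stabilityNum σ z * c := by
  unfold stabilityDen stabilityNum
  linear_combination (1 + z) * hcorr - (1 + z + z ^ 2 / 2 - (1 + σ * z) ^ 2) * hpred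

section

variable {H : Type*} [NormedAddCommGroup H] [InnerProductSpace ℝ H]

theorem inner_apply_eq_mul_of_apply_eq_smul {A : H →ₗ[ℝ] H} (hA : A.IsSymmetric) {b : H} {μ : ℝ}
    (hb : A b = μ • b) (v : H) : ⟪A v, b⟫ = μ * ⟪v, b⟫ := by
  rw [hA, hb, real_inner_smul_right]

theorem stabilityDen_mul_inner_eq {A : H →ₗ[ℝ] H} (hA : A.IsSymmetric) {b : H} {μ : ℝ}
    (hb : A b = μ • b) {τ σ : ℝ} (hτ : τ ≠ 0) {y ytil yplus : H}
    (hpred : ((LinearMap.id + τ • A : H →ₗ[ℝ] H)) (τ⁻¹ • (ytil - y)) + A y = 0)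
    (hcorr : ((LinearMap.id + (σ * τ) • A) ∘ₗ (LinearMap.id + (σ * τ) • A)) (τ⁻¹ • (yplus - y))
      + ((LinearMap.id + τ • A + (τ ^ 2 / 2) • (A ∘ₗ A)
          - (LinearMap.id + (σ * τ) • A) ∘ₗ (LinearMap.id + (σ * τ) • A) : H →ₗ[ℝ] H))
          (τ⁻¹ • (ytil - y))
      + ((A + (τ / 2) • (A ∘ₗ A) : H →ₗ[ℝ] H)) y = 0) :
    stabilityDen σ (τ * μ) * ⟪yplus, b⟫ = stabilityNum σ (τ * μ) * ⟪y, b⟫ := by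
  have hAb := inner_apply_eq_mul_of_apply_eq_smul hA hb
  have hpred' := congrArg (⟪·, b⟫) hpred
  have hcorr' := congrArg (⟪·, b⟫) hcorr
  simp only [LinearMap.add_apply, LinearMap.sub_apply, LinearMap.smul_apply, LinearMap.id_apply,
    LinearMap.comp_apply, inner_add_left, inner_sub_left, inner_zero_left, real_inner_smul_left,
    hAb] at hpred' hcorr'
  apply stabilityDen_mul_eq (t := ⟪ytil, b⟫)
  · linear_combination τ * hpred' - (⟪ytil, b⟫ - ⟪y, b⟫) * (1 + τ * μ) * mul_inv_cancel₀ hτ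
  · field_simp at hcorr'
    linear_combination hcorr' / 2

theorem norm_le_norm_of_forall_abs_inner_le {ι : Type*} [Fintype ι] (b : OrthonormalBasis ι ℝ H)
    {x y : H} (h : ∀ i, |⟪x, b i⟫| ≤ |⟪y, b i⟫|) : ‖x‖ ≤ ‖y‖ := by
  rw [← pow_le_pow_iff_left₀ (norm_nonneg x) (norm_nonneg y) two_ne_zero,
    ← b.sum_sq_inner_left, ← b.sum_sq_inner_left]
  exact Finset.sum_le_sum fun i _ ↦ sq_le_sq.mpr (h i)

end

end FactorizedScheme

open FactorizedScheme

/-- For a symmetric positive definite `A`, `τ > 0` and `σ ≥ 1/√2`,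
one step of the two-stage factorized scheme (backward Euler prediction
`(I + τA)(ỹ − y)/τ + A y = 0` followed by the factorized correction
`(I + στA)² (y⁺ − y)/τ + (I + τA + (τ²/2)A² − (I + στA)²)(ỹ − y)/τ + (A + (τ/2)A²) y = 0`)
does not increase the norm: `‖y⁺‖ ≤ ‖y‖`.
Here `P = I + στA`, so `P ∘ₗ P = (I + στA)²`. -/
theorem stmt_8 {H : Type*} [NormedAddCommGroup H] [InnerProductSpace ℝ H]
    [FiniteDimensional ℝ H]
    (A : H →ₗ[ℝ] H)
    (hsym : ∀ x y : H, ⟪A x, y⟫ = ⟪x, A y⟫)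
    (hpos : ∀ v : H, v ≠ 0 → 0 < ⟪A v, v⟫)
    (τ σ : ℝ) (hτ : 0 < τ) (hσ : 1 / Real.sqrt 2 ≤ σ)
    (P : H →ₗ[ℝ] H) (hP : P = LinearMap.id + (σ * τ) • A)
    (y ytil yplus : H)
    (hpred : ((LinearMap.id + τ • A : H →ₗ[ℝ] H)) (τ⁻¹ • (ytil - y)) + A y = 0)
    (hcorr : (P ∘ₗ P) (τ⁻¹ • (yplus - y))
      + ((LinearMap.id + τ • A + (τ ^ 2 / 2) • (A ∘ₗ A) - P ∘ₗ P : H →ₗ[ℝ] H))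
          (τ⁻¹ • (ytil - y))
      + ((A + (τ / 2) • (A ∘ₗ A) : H →ₗ[ℝ] H)) y = 0) :
    ‖yplus‖ ≤ ‖y‖ := by
  subst hP
  have hA : A.IsPositive := ⟨hsym, fun v ↦ by
    rcases eq_or_ne v 0 with rfl | hv
    · simp
    · simpa using (hpos v hv).le⟩
  refine norm_le_norm_of_forall_abs_inner_le (hA.isSymmetric.eigenvectorBasis rfl) fun i ↦ ?_
  refine abs_le_abs_of_stabilityDen_mul_eq hσ
    (mul_nonneg hτ.le (hA.nonneg_eigenvalues rfl i)) ?_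
  exact stabilityDen_mul_inner_eq hA.isSymmetric (hA.isSymmetric.apply_eigenvectorBasis rfl i)
    hτ.ne' hpred hcorr
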